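/- For all m ≥ 1 and d ≥ 0: iterating the Macaulay operator d times on D_m − 1 gives [[(D_m − 1)^{<m>}]^{<m+1>} ⋯]^{<m+d-1>} = D_{m+d} − D_d, where D_k = C(k+n-1,k). -/

import Mathlib

/-!
For `n = p + 2` write `D_t = C(t + p + 1, t) = ∑_{j ≤ t} C(j + p, j)` (hockey stick). Then
`D_{m+i} − D_i = ∑_{j = i+1}^{m+i} C(j + p, j)`, and this sum is already an `(m+i)`-th Macaulay
representation, with top entries `j + p`. Macaulay representations are unique, so the operator
acts on it termwise, `C(j + p, j) ↦ C(j + p + 1, j + 1)`, which shifts the range of summation by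
one and produces `D_{m+i+1} − D_{i+1}`. For `n ≤ 1` we have `D_m − 1 = 0`, which has no
Macaulay representation, so only `d = 0` occurs.
-/

/-- `MacaulayRep m c J k` says that `c = C(k m, m) + ⋯ + C(k J, J)` is the `m`-th
Macaulay representation of `c` (top entries `k m > ⋯ > k J ≥ J > 0`). -/
def MacaulayRep (m c J : ℕ) (k : ℕ → ℕ) : Prop :=
  0 < J ∧ J ≤ m ∧ StrictMonoOn k (Set.Icc J m) ∧ J ≤ k J ∧
    c = ∑ j ∈ Finset.Icc J m, (k j).choose j

/-- `MacaulayStep s x y` says that `y = x^{<s>}`, the Macaulay operator in degree `s`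
applied to `x`. -/
def MacaulayStep (s x y : ℕ) : Prop :=
  ∃ J k, MacaulayRep s x J k ∧ y = ∑ j ∈ Finset.Icc J s, (k j + 1).choose (j + 1)

open Finset

namespace MacaulayRep

variable {s c J : ℕ} {k : ℕ → ℕ}

theorem le_apply (h : MacaulayRep s c J k) {j : ℕ} (hJj : J ≤ j) (hjs : j ≤ s) : j ≤ k j := by
  induction j, hJj using Nat.le_induction with
  | base => exact h.2.2.2.1
  | succ j hJj ih =>
    have : k j < k (j + 1) := h.2.2.1 ⟨hJj, by omega⟩ ⟨by omega, hjs⟩ j.lt_succ_self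
    have := ih (by omega)
    omega

theorem pos (h : MacaulayRep s c J k) : 0 < c := by
  rw [h.2.2.2.2]
  exact sum_pos (fun j hj ↦ Nat.choose_pos (h.le_apply (mem_Icc.1 hj).1 (mem_Icc.1 hj).2))
    (nonempty_Icc.2 h.2.1)

theorem choose_top_le (h : MacaulayRep s c J k) : (k s).choose s ≤ c := by
  rw [h.2.2.2.2]
  exact single_le_sum (f := fun j ↦ (k j).choose j) (fun _ _ ↦ Nat.zero_le _)
    (mem_Icc.2 ⟨h.2.1, le_rfl⟩)

theorem exists_add_choose_top (h : MacaulayRep (s + 1) c J k) (hJs : J ≤ s) :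
    ∃ c', MacaulayRep s c' J k ∧ c = c' + (k (s + 1)).choose (s + 1) := by
  obtain ⟨hJ, -, hk, hkJ, rfl⟩ := h
  refine ⟨_, ⟨hJ, hJs, hk.mono (Set.Icc_subset_Icc_right s.le_succ), hkJ, rfl⟩, ?_⟩
  exact sum_Icc_succ_top (by omega) _

theorem eq_choose_top_iff (h : MacaulayRep (s + 1) c J k) :
    J = s + 1 ↔ c = (k (s + 1)).choose (s + 1) := by
  refine ⟨fun hJ ↦ ?_, fun hc ↦ ?_⟩
  · rw [h.2.2.2.2, hJ, Icc_self, sum_singleton]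
  · by_contra hJ
    obtain ⟨c', h', rfl⟩ := h.exists_add_choose_top (by have := h.2.1; omega)
    have := h'.pos
    omega

theorem lt_choose_succ (h : MacaulayRep s c J k) : c < (k s + 1).choose s := by
  induction s generalizing c J with
  | zero => have := h.1; have := h.2.1; omega
  | succ s ih =>
    have hks : s + 1 ≤ k (s + 1) := h.le_apply h.2.1 le_rfl
    rw [Nat.choose_succ_succ']
    by_cases hJ : J = s + 1
    · have := (h.eq_choose_top_iff).1 hJ
      have := Nat.choose_pos (show s ≤ k (s + 1) by omega)
      omega
    · obtain ⟨c', h', rfl⟩ := h.exists_add_choose_top (by have := h.2.1; omega)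
      have hk : k s < k (s + 1) := h.2.2.1 ⟨h'.2.1, by omega⟩ ⟨h.2.1, le_rfl⟩ s.lt_succ_self
      have := ih h'
      have := Nat.choose_le_choose s (show k s + 1 ≤ k (s + 1) by omega)
      omega

/-- The top entry is forced by `C(k s, s) ≤ c < C(k s + 1, s)`. -/
theorem apply_top_le {J' : ℕ} {k' : ℕ → ℕ} (h : MacaulayRep s c J k)
    (h' : MacaulayRep s c J' k') : k s ≤ k' s := by
  by_contra! hlt
  have := Nat.choose_le_choose s (show k' s + 1 ≤ k s by omega)
  have := h.choose_top_le
  have := h'.lt_choose_succ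
  omega

theorem unique {J' : ℕ} {k' : ℕ → ℕ} (h : MacaulayRep s c J k) (h' : MacaulayRep s c J' k') :
    J = J' ∧ Set.EqOn k k' (Set.Icc J s) := by
  induction s generalizing c J J' with
  | zero => have := h.1; have := h.2.1; omega
  | succ s ih =>
    have htop : k (s + 1) = k' (s + 1) := le_antisymm (h.apply_top_le h') (h'.apply_top_le h)
    have hJ_iff : J = s + 1 ↔ J' = s + 1 := by
      rw [h.eq_choose_top_iff, h'.eq_choose_top_iff, htop]
    by_cases hJ : J = s + 1
    · refine ⟨hJ.trans (hJ_iff.1 hJ).symm, fun j hj ↦ ?_⟩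
      obtain rfl : j = s + 1 := by have := hj.1; have := hj.2; omega
      exact htop
    · obtain ⟨c₁, h₁, rfl⟩ := h.exists_add_choose_top (by have := h.2.1; omega)
      obtain ⟨c₂, h₂, hc⟩ := h'.exists_add_choose_top (by have := h'.2.1; have := hJ_iff; omega)
      obtain rfl : c₁ = c₂ := by rw [htop] at hc; omega
      obtain ⟨rfl, hk⟩ := ih h₁ h₂
      refine ⟨rfl, fun j hj ↦ ?_⟩
      rcases (show j ≤ s ∨ j = s + 1 by have := hj.2; omega) with hjs | rfl
      exacts [hk ⟨hj.1, hjs⟩, htop]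

end MacaulayRep

theorem MacaulayStep.eq_sum_of_macaulayRep {s x y J : ℕ} {k : ℕ → ℕ} (hy : MacaulayStep s x y)
    (h : MacaulayRep s x J k) : y = ∑ j ∈ Icc J s, (k j + 1).choose (j + 1) := by
  obtain ⟨J', k', h', rfl⟩ := hy
  obtain ⟨rfl, hk⟩ := h'.unique h
  exact sum_congr rfl fun j hj ↦ by rw [hk (mem_Icc.1 hj)]

theorem macaulayRep_sum_Icc_add_choose (p : ℕ) {J s : ℕ} (hJ : 0 < J) (hJs : J ≤ s) :
    MacaulayRep s (∑ j ∈ Icc J s, (j + p).choose j) J (· + p) :=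
  ⟨hJ, hJs, fun _ _ _ _ hlt ↦ Nat.add_lt_add_right hlt p, Nat.le_add_right J p, rfl⟩

theorem sum_Icc_add_choose_succ (p J s : ℕ) :
    ∑ j ∈ Icc J s, (j + p + 1).choose (j + 1) = ∑ j ∈ Icc (J + 1) (s + 1), (j + p).choose j := by
  rw [← Ico_add_one_right_eq_Icc, ← Ico_add_one_right_eq_Icc,
    ← sum_Ico_add' (fun j ↦ (j + p).choose j)]
  simp only [add_right_comm]

theorem sum_Icc_add_choose_eq_sub (p : ℕ) {i t : ℕ} (hit : i ≤ t) :
    ∑ j ∈ Icc (i + 1) t, (j + p).choose j = (t + p + 1).choose t - (i + p + 1).choose i := by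
  have hockey (t : ℕ) : ∑ j ∈ range (t + 1), (j + p).choose j = (t + p + 1).choose t := by
    simp_rw [Nat.choose_symm_add]
    rw [Nat.sum_range_add_choose, add_assoc, Nat.choose_symm_add]
  rw [← hockey, ← hockey, ← sum_range_add_sum_Ico _ (by omega : i + 1 ≤ t + 1),
    Ico_add_one_right_eq_Icc, Nat.add_sub_cancel_left]

theorem macaulay_iterate_Dm_sub_one_general (n m d : ℕ) (a : ℕ → ℕ)
    (ha0 : a 0 = (m + n - 1).choose m - 1)
    (hstep : ∀ i < d, MacaulayStep (m + i) (a i) (a (i + 1))) :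
    a d = (m + d + n - 1).choose (m + d) - (d + n - 1).choose d := by
  rcases Nat.eq_zero_or_pos d with rfl | hd
  · simpa using ha0
  obtain ⟨J, k, h₀, -⟩ := hstep 0 hd
  have hm : 0 < m := h₀.1.trans_le h₀.2.1
  obtain ⟨p, rfl⟩ : ∃ p, n = p + 2 := by
    refine ⟨n - 2, ?_⟩
    by_contra hn
    have : (m + n - 1).choose m ≤ 1 := by
      rcases (show m + n - 1 < m ∨ m + n - 1 = m by omega) with hlt | heq
      · simp [Nat.choose_eq_zero_of_lt hlt]
      · simp [heq]
    have := h₀.pos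
    omega
  have key (i : ℕ) (hi : i ≤ d) : a i = ∑ j ∈ Icc (i + 1) (m + i), (j + p).choose j := by
    induction i with
    | zero =>
      rw [ha0, sum_Icc_add_choose_eq_sub p (Nat.zero_le _)]
      simp [show m + (p + 2) - 1 = m + p + 1 by omega]
    | succ i ih =>
      rw [(hstep i hi).eq_sum_of_macaulayRep
        ((ih (by omega)) ▸ macaulayRep_sum_Icc_add_choose p (by omega) (by omega)),
        sum_Icc_add_choose_succ]
      rfl
  rw [key d le_rfl, sum_Icc_add_choose_eq_sub p (by omega)]
  congr 2

/-- For `m ≥ 1` and `d ≥ 0`, iterating the Macaulay operator `d` times on `D_m − 1`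
in degrees `m, m+1, …, m+d-1` yields `D_{m+d} − D_d`, where `D_k = C(k+n-1, k)`. -/
theorem macaulay_iterate_Dm_sub_one (n m d : ℕ) (hm : 1 ≤ m) (a : ℕ → ℕ)
    (ha0 : a 0 = (m + n - 1).choose m - 1)
    (hstep : ∀ i < d, MacaulayStep (m + i) (a i) (a (i + 1))) :
    a d = (m + d + n - 1).choose (m + d) - (d + n - 1).choose d :=
  macaulay_iterate_Dm_sub_one_general n m d a ha0 hstep
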